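/- A matrix M ∈ ℝ^{n×n} is a P-matrix if and only if for all nonnegative diagonal matrices F₀, F₁ ∈ ℝ^{n×n} with F₀ + F₁ having all diagonal entries positive, the matrix M·F₀ + F₁ is nonsingular. -/

import Mathlib

open Matrix

/-- A square real matrix is a `P`-matrix if all of its principal minors are positive. -/
def IsPMatrix {n : ℕ} (M : Matrix (Fin n) (Fin n) ℝ) : Prop :=
  ∀ s : Finset (Fin n), s.Nonempty →
    0 < (M.submatrix (fun i : s => (i : Fin n)) (fun i : s => (i : Fin n))).det

/-- The (unordered) singular values of a real square matrix: square roots of the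
eigenvalues of `Aᵀ * A`. -/
noncomputable def singVals {n : ℕ} (A : Matrix (Fin n) (Fin n) ℝ) : Fin n → ℝ :=
  fun i => Real.sqrt ((show (Aᵀ * A).IsHermitian from Matrix.isHermitian_conjTranspose_mul_self A).eigenvalues i)

/-- `svalsDecr A i` is the `i`-th largest singular value of `A` (so `svalsDecr A 0 = σ₁`). -/
noncomputable def svalsDecr {n : ℕ} (A : Matrix (Fin n) (Fin n) ℝ) : Fin n → ℝ :=
  fun i => singVals A (Tuple.sort (singVals A) (Fin.rev i))

/-- The maximal singular value `σ₁`. -/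
noncomputable def maxSV {n : ℕ} (A : Matrix (Fin n) (Fin n) ℝ) : ℝ :=
  ⨆ i, singVals A i

/-- The minimal singular value `σₙ`. -/
noncomputable def minSV {n : ℕ} (A : Matrix (Fin n) (Fin n) ℝ) : ℝ :=
  ⨅ i, singVals A i

/-- The spectral radius of a real square matrix (as the spectral radius of its
complexification), valued in `ℝ≥0∞`. -/
noncomputable def specRad {n : ℕ} (A : Matrix (Fin n) (Fin n) ℝ) : ENNReal :=
  spectralRadius ℂ (A.map (Complex.ofReal))

/-!
Multilinearity of the determinant in the columns expands `det (M F₀ + F₁)` as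
`∑ₛ (∏_{i ∈ s} f₀ i) (∏_{i ∉ s} f₁ i) det M[s]`, a sum of nonnegative terms when `M` is a
P-matrix, with a positive term at `s = {i | f₀ i > 0}`. Conversely, taking `F₀` the indicator
of `s` and `F₁ = t` on `s`, `1` off `s`, gives `det (M[s] + t) ≠ 0` for every `t ≥ 0`; since
`t ↦ det (M[s] + t)` is monic in `t`, it is positive at `t = 0`.
-/

open Polynomial

namespace Matrix

variable {ι R : Type*} [Fintype ι] [DecidableEq ι] [CommRing R]

theorem det_diagonal_mul_add_diagonal (M : Matrix ι ι R) (f₀ f₁ : ι → R) :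
    (diagonal f₀ * M + diagonal f₁).det =
      ∑ s : Finset ι, (∏ i ∈ s, f₀ i) * (∏ i ∈ sᶜ, f₁ i) *
        (M.submatrix ((↑) : s → ι) (↑)).det := by
  have hrows : diagonal f₀ * M + diagonal f₁ =
      (fun i => f₀ i • M i) + fun i => f₁ i • (1 : Matrix ι ι R) i := by
    ext i j
    simp [diagonal_apply, one_apply]
  rw [hrows]
  refine (detRowAlternating.map_add_univ _ _).trans (Finset.sum_congr rfl fun s _ => ?_)
  have hpiece : s.piecewise (fun i => f₀ i • M i) (fun i => f₁ i • (1 : Matrix ι ι R) i) =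
      fun i => s.piecewise f₀ f₁ i • s.piecewise M.row (1 : Matrix ι ι R).row i := by
    ext i : 1
    by_cases hi : i ∈ s <;> simp [hi] <;> rfl
  rw [hpiece, AlternatingMap.map_smul_univ, Finset.prod_piecewise, Finset.univ_inter,
    ← Finset.compl_eq_univ_sdiff, smul_eq_mul]
  exact congrArg _ (det_piecewise_one_eq_submatrix_det M s)

theorem det_mul_diagonal_add_diagonal (M : Matrix ι ι R) (f₀ f₁ : ι → R) :
    (M * diagonal f₀ + diagonal f₁).det =
      ∑ s : Finset ι, (∏ i ∈ s, f₀ i) * (∏ i ∈ sᶜ, f₁ i) *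
        (M.submatrix ((↑) : s → ι) (↑)).det := by
  rw [← det_transpose, transpose_add, transpose_mul, diagonal_transpose, diagonal_transpose,
    det_diagonal_mul_add_diagonal]
  simp only [← transpose_submatrix, det_transpose]

theorem det_mul_diagonal_piecewise_add_diagonal_piecewise (M : Matrix ι ι R) (s : Finset ι)
    (t : R) :
    (M * diagonal (s.piecewise 1 0) + diagonal (s.piecewise (fun _ => t) 1)).det =
      (M.submatrix ((↑) : s → ι) (↑) + t • 1).det := by
  have hcols : (M * diagonal (s.piecewise 1 0) + diagonal (s.piecewise (fun _ => t) 1))ᵀ =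
      of (s.piecewise (Mᵀ + t • 1).row (1 : Matrix ι ι R).row) := by
    ext i j
    simp only [Finset.piecewise, row, of_apply]
    obtain rfl | hij := eq_or_ne i j
    · by_cases hi : i ∈ s <;> simp [hi]
    · by_cases hi : i ∈ s <;> simp [hi, hij, hij.symm]
  rw [← det_transpose, hcols, det_piecewise_one_eq_submatrix_det, ← det_transpose,
    transpose_submatrix, transpose_add, transpose_smul, transpose_one, transpose_transpose]
  congr 1
  ext i j
  simp only [submatrix_apply, add_apply, smul_apply, one_apply, Subtype.ext_iff]

/-- `t ↦ det (A + t • 1)` is the characteristic polynomial of `-A`, which is monic and hence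
positive to the right of all its real roots. -/
theorem det_pos_of_det_add_smul_one_ne_zero (A : Matrix ι ι ℝ)
    (h : ∀ t : ℝ, 0 ≤ t → (A + t • 1).det ≠ 0) : 0 < A.det := by
  have hroots (y : ℝ) (hy : (-A).charpoly.IsRoot y) : y < 0 := by
    by_contra! hy0
    refine h y hy0 ?_
    rwa [IsRoot, eval_charpoly, sub_neg_eq_add, add_comm, scalar_apply,
      ← smul_one_eq_diagonal] at hy
  simpa [eval_charpoly] using zero_lt_eval_of_roots_lt_of_leadingCoeff_nonneg hroots
    (by rw [(charpoly_monic (-A)).leadingCoeff]; exact zero_le_one)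

end Matrix

theorem IsPMatrix.det_mul_diagonal_add_diagonal_pos {n : ℕ} {M : Matrix (Fin n) (Fin n) ℝ}
    (hM : IsPMatrix M) {f₀ f₁ : Fin n → ℝ} (h₀ : ∀ i, 0 ≤ f₀ i) (h₁ : ∀ i, 0 ≤ f₁ i)
    (h : ∀ i, 0 < f₀ i + f₁ i) : 0 < (M * diagonal f₀ + diagonal f₁).det := by
  have hminor (s : Finset (Fin n)) : 0 < (M.submatrix ((↑) : s → Fin n) (↑)).det := by
    rcases s.eq_empty_or_nonempty with rfl | hs
    · simp
    · exact hM s hs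
  rw [det_mul_diagonal_add_diagonal]
  refine Finset.sum_pos' (fun s _ => ?_)
    ⟨({i | 0 < f₀ i} : Finset (Fin n)), Finset.mem_univ _, ?_⟩
  · exact mul_nonneg (mul_nonneg (Finset.prod_nonneg fun i _ => h₀ i)
      (Finset.prod_nonneg fun i _ => h₁ i)) (hminor s).le
  · have hf₁ : ∀ i ∈ ({i | 0 < f₀ i} : Finset (Fin n))ᶜ, 0 < f₁ i := fun i hi => by
      simp only [Finset.mem_compl, Finset.mem_filter_univ, not_lt] at hi
      linarith [h i]
    exact mul_pos (mul_pos (Finset.prod_pos fun i hi => by simpa using hi)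
      (Finset.prod_pos hf₁)) (hminor _)

theorem isPMatrix_of_forall_isUnit_mul_diagonal_add_diagonal {n : ℕ}
    {M : Matrix (Fin n) (Fin n) ℝ}
    (H : ∀ f₀ f₁ : Fin n → ℝ, (∀ i, 0 ≤ f₀ i) → (∀ i, 0 ≤ f₁ i) → (∀ i, 0 < f₀ i + f₁ i) →
      IsUnit (M * diagonal f₀ + diagonal f₁)) :
    IsPMatrix M := by
  intro s _
  refine det_pos_of_det_add_smul_one_ne_zero _ fun t ht => ?_
  rw [← det_mul_diagonal_piecewise_add_diagonal_piecewise, ← isUnit_iff_ne_zero,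
    ← isUnit_iff_isUnit_det]
  refine H _ _ (fun i => ?_) (fun i => ?_) (fun i => ?_) <;>
    by_cases hi : i ∈ s <;> simp [hi, ht, add_pos_of_pos_of_nonneg zero_lt_one ht]

theorem stmt2 {n : ℕ} (M : Matrix (Fin n) (Fin n) ℝ) :
    IsPMatrix M ↔
      ∀ f₀ f₁ : Fin n → ℝ, (∀ i, 0 ≤ f₀ i) → (∀ i, 0 ≤ f₁ i) →
        (∀ i, 0 < f₀ i + f₁ i) →
        IsUnit (M * Matrix.diagonal f₀ + Matrix.diagonal f₁) :=
  ⟨fun hM _ _ h₀ h₁ h =>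
    (isUnit_iff_isUnit_det _).2 (hM.det_mul_diagonal_add_diagonal_pos h₀ h₁ h).ne'.isUnit,
    isPMatrix_of_forall_isUnit_mul_diagonal_add_diagonal⟩
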